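/- arXiv:1503.08941 — 3 statements merged into one kernel-verified Lean document; each statement's English description precedes it below -/
import Mathlib

section
/- For every n ≥ 4 and every d with 3 ≤ d ≤ n−1, the graph G obtained from a complete graph K_{n−d+1} by attaching a path of length d−1 at one of its vertices satisfies diam(G) = d and mvc(G) = n − d + 2. -/
open SimpleGraph

/-- A vertex-coloring `c` of `G` is an MVC-coloring if any two vertices are joined by a
path whose internal vertices all have the same color. -/
def IsMVCColoring {V : Type*} (G : SimpleGraph V) (c : V → ℕ) : Prop :=
  ∀ u v : V, ∃ p : G.Walk u v, p.IsPath ∧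
    ∀ x ∈ p.support.tail.dropLast, ∀ y ∈ p.support.tail.dropLast, c x = c y

/-- The monochromatic vertex-connection number: the maximum number of colors
used in an MVC-coloring of `G`. -/
noncomputable def mvc {V : Type*} (G : SimpleGraph V) : ℕ :=
  sSup {k : ℕ | ∃ c : V → ℕ, IsMVCColoring G c ∧ (Set.range c).ncard = k}

/-- The graph obtained from `K_{n-d+1}` (on vertices `0,…,n-d`) by attaching a path of
length `d-1` at vertex `n-d` (through vertices `n-d, n-d+1, …, n-1`). -/
def cliqueWithPath (n d : ℕ) : SimpleGraph (Fin n) :=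
  SimpleGraph.fromRel (fun i j =>
    (i.val ≤ n - d ∧ j.val ≤ n - d) ∨ (j.val = i.val + 1 ∧ n - d ≤ i.val))

/-! Write `m = n - d`. The potential `x ↦ max 0 (x - m + 1)` grows by at most one along each
edge, so every walk from `0` to `n - 1` has length at least `d`; conversely any two vertices are
joined by a path of length at most `d` all of whose internal vertices lie in `{m, …, n - 2}`.

For an MVC-colouring, the internal vertices of a `u`–`v` path are at least `dist u v - 1`
vertices of one colour, so at most `n - dist u v + 2` colours occur, which is `n - d + 2` for
`u = 0`, `v = n - 1`. This is attained by giving `0, …, m - 1` distinct colours, `m, …, n - 2`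
one further colour and `n - 1` another: the short paths above have monochromatic interiors. -/

lemma Set.ncard_range_add_ncard_le_of_const_on {α β : Type*} [Finite α] {c : α → β}
    {s : Set α} (hs : ∀ x ∈ s, ∀ y ∈ s, c x = c y) :
    (Set.range c).ncard + s.ncard ≤ Nat.card α + 1 := by
  have hsub : Set.range c ⊆ c '' s ∪ c '' sᶜ := by
    rw [← Set.image_union, Set.union_compl_self, Set.image_univ]
  have hs1 : (c '' s).ncard ≤ 1 :=
    (Set.ncard_le_one_iff).2 fun {_ _} ⟨x, hx, hxa⟩ ⟨y, hy, hyb⟩ => hxa ▸ hyb ▸ hs x hx y hy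
  have hcompl := Set.ncard_add_ncard_compl s
  have hrange := Set.ncard_le_ncard hsub
  have hunion := Set.ncard_union_le (c '' s) (c '' sᶜ)
  have hs2 := Set.ncard_image_le (f := c) (s := sᶜ)
  omega

namespace SimpleGraph

variable {V : Type*} {G : SimpleGraph V}

lemma Walk.IsPath.ne_of_mem_support_tail_dropLast {u v x : V} {p : G.Walk u v}
    (hp : p.IsPath) (hx : x ∈ p.support.tail.dropLast) : x ≠ u ∧ x ≠ v := by
  have hnd := hp.support_nodup
  rw [← p.cons_tail_support, List.nodup_cons] at hnd
  have htail : p.support.tail ≠ [] := List.ne_nil_of_mem (List.dropLast_subset _ hx)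
  have hlast : p.support.tail.getLast htail = v := by simp
  refine ⟨fun hxu => hnd.1 (hxu ▸ List.dropLast_subset _ hx :), fun hxv => ?_⟩
  have := hnd.2
  rw [← List.dropLast_append_getLast htail, List.nodup_append] at this
  exact this.2.2 x hx _ (by simp [hlast, hxv]) rfl

lemma Walk.le_add_length_of_adj_le {f : V → ℕ} (hf : ∀ a b, G.Adj a b → f b ≤ f a + 1)
    {u v : V} (p : G.Walk u v) : f v ≤ f u + p.length := by
  induction p with
  | nil => simp
  | cons hab _ ih => rw [Walk.length_cons]; have := hf _ _ hab; omega

lemma diam_eq_of_forall_exists_walk_length_le {k : ℕ}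
    (hle : ∀ u v, ∃ p : G.Walk u v, p.length ≤ k) {u₀ v₀ : V} (hk : G.dist u₀ v₀ = k) :
    G.diam = k := by
  have hreach : G.Reachable u₀ v₀ := (hle u₀ v₀).elim fun p _ => ⟨p⟩
  have hediam : G.ediam = k := by
    refine le_antisymm (ediam_le_of_edist_le fun u v => ?_) ?_
    · obtain ⟨p, hp⟩ := hle u v
      exact (edist_le p).trans (by exact_mod_cast hp)
    · rw [← hk, hreach.coe_dist_eq_edist]
      exact edist_le_ediam
  simp [diam, hediam]

end SimpleGraph

lemma IsMVCColoring.ncard_range_add_dist_le {V : Type*} [Finite V] {G : SimpleGraph V}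
    {c : V → ℕ} (hc : IsMVCColoring G c) (u v : V) :
    (Set.range c).ncard + G.dist u v ≤ Nat.card V + 2 := by
  classical
  obtain ⟨p, hp, hmono⟩ := hc u v
  have hcard : {x | x ∈ p.support.tail.dropLast}.ncard = p.length - 1 := by
    have hnd : p.support.tail.dropLast.Nodup :=
      hp.support_nodup.sublist ((List.dropLast_sublist _).trans (List.tail_sublist _))
    rw [← List.coe_toFinset, Set.ncard_coe_finset, List.toFinset_card_of_nodup hnd]
    simp
  have hbound :=
    Set.ncard_range_add_ncard_le_of_const_on (s := {x | x ∈ p.support.tail.dropLast}) hmono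
  have hdist := dist_le p
  omega

namespace cliqueWithPath

variable {n d : ℕ}

lemma adj_iff {i j : Fin n} :
    (cliqueWithPath n d).Adj i j ↔ i ≠ j ∧
      ((i.val ≤ n - d ∧ j.val ≤ n - d) ∨ (j.val = i.val + 1 ∧ n - d ≤ i.val) ∨
        (i.val = j.val + 1 ∧ n - d ≤ j.val)) := by
  simp only [cliqueWithPath, fromRel_adj]
  tauto

lemma adj_of_le {i j : Fin n} (hij : i ≠ j) (hi : i.val ≤ n - d) (hj : j.val ≤ n - d) :
    (cliqueWithPath n d).Adj i j :=
  adj_iff.2 ⟨hij, Or.inl ⟨hi, hj⟩⟩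

lemma adj_of_val_eq_succ {i j : Fin n} (hi : n - d ≤ i.val) (hj : j.val = i.val + 1) :
    (cliqueWithPath n d).Adj i j :=
  adj_iff.2 ⟨fun h => by simp [h] at hj, Or.inr (Or.inl ⟨hj, hi⟩)⟩

lemma exists_isPath_of_val_eq_add (k : ℕ) {u v : Fin n} (hu : n - d ≤ u.val)
    (hv : v.val = u.val + k) :
    ∃ p : (cliqueWithPath n d).Walk u v, p.IsPath ∧ p.length = k ∧
      ∀ x ∈ p.support, u.val ≤ x.val ∧ x.val ≤ v.val := by
  induction k generalizing u with
  | zero =>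
    obtain rfl : u = v := Fin.ext hv.symm
    exact ⟨.nil, by simp, by simp⟩
  | succ k ih =>
    obtain ⟨q, hq, hlen, hsupp⟩ := ih (u := ⟨u.val + 1, by omega⟩) (by simp; omega) (by simp; omega)
    have hnotin : u ∉ q.support := fun h => by have := hsupp u h; simp at this
    refine ⟨.cons (adj_of_val_eq_succ hu rfl) q, hq.cons hnotin, by simp [hlen], ?_⟩
    simp only [Walk.support_cons, List.mem_cons, forall_eq_or_imp]
    exact ⟨by omega, fun x hx => by have := hsupp x hx; simp at this; omega⟩

lemma exists_isPath_length_le (hd : 0 < d) (u v : Fin n) :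
    ∃ p : (cliqueWithPath n d).Walk u v, p.IsPath ∧ p.length ≤ d ∧
      ∀ x ∈ p.support, x = u ∨ x = v ∨ (n - d ≤ x.val ∧ x.val < n - 1) := by
  wlog huv : u.val ≤ v.val generalizing u v
  · obtain ⟨p, hp, hlen, hsupp⟩ := this v u (by omega)
    exact ⟨p.reverse, hp.reverse, by simpa using hlen,
      fun x hx => by have := hsupp x (by simpa using hx); tauto⟩
  by_cases heq : u = v
  · subst heq
    exact ⟨.nil, by simp, by simp, by simp⟩
  by_cases hv : v.val ≤ n - d
  · exact ⟨.cons (adj_of_le heq (by omega) hv) .nil, by simp [heq], by simp; omega, by simp⟩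
  by_cases hu : n - d ≤ u.val
  · obtain ⟨p, hp, hlen, hsupp⟩ :=
      exists_isPath_of_val_eq_add (v := v) (v.val - u.val) hu (by omega)
    refine ⟨p, hp, by omega, fun x hx => ?_⟩
    have := hsupp x hx
    rcases eq_or_ne x v with rfl | hxv
    · exact Or.inr (Or.inl rfl)
    · right; right; have := Fin.val_ne_of_ne hxv; omega
  · let w : Fin n := ⟨n - d, by omega⟩
    have hw : w.val = n - d := rfl
    obtain ⟨p, hp, hlen, hsupp⟩ :=
      exists_isPath_of_val_eq_add (u := w) (v := v) (v.val - (n - d)) hw.ge (by omega)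
    have hnotin : u ∉ p.support := fun h => by have := hsupp u h; omega
    have huw : u ≠ w := fun h => by have := Fin.val_eq_of_eq h; omega
    refine ⟨.cons (adj_of_le huw (by omega) le_rfl) p, hp.cons hnotin, by simp; omega, ?_⟩
    simp only [Walk.support_cons, List.mem_cons, forall_eq_or_imp]
    refine ⟨by simp, fun x hx => ?_⟩
    have := hsupp x hx
    rcases eq_or_ne x v with rfl | hxv
    · exact Or.inr (Or.inl rfl)
    · right; right; have := Fin.val_ne_of_ne hxv; omega

lemma le_length_of_walk_zero_last (hdn : d < n)
    (p : (cliqueWithPath n d).Walk ⟨0, by omega⟩ ⟨n - 1, by omega⟩) : d ≤ p.length := by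
  let f (x : Fin n) : ℕ := if x.val < n - d then 0 else x.val - (n - d) + 1
  have := p.le_add_length_of_adj_le (f := f) fun a b hab => by
    rcases (adj_iff.1 hab).2 with h | h | h <;> simp only [f] <;> split_ifs <;> omega
  simp only [f] at this
  split_ifs at this <;> omega

lemma dist_zero_last (hd : 0 < d) (hdn : d < n) :
    (cliqueWithPath n d).dist ⟨0, by omega⟩ ⟨n - 1, by omega⟩ = d := by
  obtain ⟨p, -, hp, -⟩ := exists_isPath_length_le hd (⟨0, by omega⟩ : Fin n) ⟨n - 1, by omega⟩
  obtain ⟨q, hq⟩ := Reachable.exists_walk_length_eq_dist ⟨p⟩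
  exact le_antisymm ((dist_le p).trans hp) (hq ▸ le_length_of_walk_zero_last hdn q)

lemma diam_eq (hd : 0 < d) (hdn : d < n) : (cliqueWithPath n d).diam = d :=
  diam_eq_of_forall_exists_walk_length_le
    (fun u v => (exists_isPath_length_le hd u v).imp fun _ h => h.2.1) (dist_zero_last hd hdn)

def mvcColoring (n d : ℕ) (x : Fin n) : ℕ :=
  if x.val < n - d then x.val else if x.val = n - 1 then n - d + 1 else n - d

lemma isMVCColoring_mvcColoring (hd : 0 < d) :
    IsMVCColoring (cliqueWithPath n d) (mvcColoring n d) := by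
  intro u v
  obtain ⟨p, hp, -, hsupp⟩ := exists_isPath_length_le hd u v
  have hinterior : ∀ x ∈ p.support.tail.dropLast, mvcColoring n d x = n - d := fun x hx => by
    obtain ⟨hxu, hxv⟩ := hp.ne_of_mem_support_tail_dropLast hx
    have := hsupp x (List.tail_subset _ (List.dropLast_subset _ hx))
    simp only [hxu, hxv, false_or] at this
    simp only [mvcColoring]
    split_ifs <;> omega
  exact ⟨p, hp, fun x hx y hy => (hinterior x hx).trans (hinterior y hy).symm⟩

lemma ncard_range_mvcColoring (hd : 2 ≤ d) (hdn : d ≤ n) :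
    (Set.range (mvcColoring n d)).ncard = n - d + 2 := by
  suffices Set.range (mvcColoring n d) = Finset.range (n - d + 2) by simp [this]
  ext k
  simp only [Set.mem_range, mvcColoring, Finset.coe_range, Set.mem_Iio]
  refine ⟨fun ⟨x, hx⟩ => by split_ifs at hx <;> omega, fun hk => ?_⟩
  rcases lt_trichotomy k (n - d) with h | rfl | h
  · exact ⟨⟨k, by omega⟩, by simp [h]⟩
  · exact ⟨⟨n - d, by omega⟩, by simp; omega⟩
  · exact ⟨⟨n - 1, by omega⟩, by simp only [if_neg (show ¬n - 1 < n - d by omega)]; simp; omega⟩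

end cliqueWithPath

open cliqueWithPath in
theorem stmt_5_general (n d : ℕ) (hd : 3 ≤ d) (hdn : d ≤ n - 1) :
    (cliqueWithPath n d).diam = d ∧ mvc (cliqueWithPath n d) = n - d + 2 := by
  refine ⟨diam_eq (by omega) (by omega), IsGreatest.csSup_eq ⟨?_, ?_⟩⟩
  · exact ⟨mvcColoring n d, isMVCColoring_mvcColoring (by omega),
      ncard_range_mvcColoring (by omega) (by omega)⟩
  · rintro k ⟨c, hc, rfl⟩
    have := hc.ncard_range_add_dist_le ⟨0, by omega⟩ ⟨n - 1, by omega⟩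
    rw [dist_zero_last (by omega) (by omega), Nat.card_fin] at this
    omega

theorem stmt_5 (n d : ℕ) (hn : 4 ≤ n) (hd : 3 ≤ d) (hdn : d ≤ n - 1) :
    (cliqueWithPath n d).diam = d ∧ mvc (cliqueWithPath n d) = n - d + 2 :=
  stmt_5_general n d hd hdn
end

section
/- Let C_n be the cycle on n vertices. Then mvc(C_n) = n for n ≤ 5, and mvc(C_n) = 3 for n ≥ 6. -/
open SimpleGraph

/-! In a cycle the only paths between two vertices are the two arcs joining them, so a colouring
of `C_n` is an MVC-colouring iff for all `u`, `v` one of the two open arcs between them is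
monochromatic. For `n ≤ 5` one of these arcs has at most one vertex, so every colouring works,
in particular an injective one. For `n ≥ 6`, colouring all vertices but two adjacent ones alike
gives three colours. Conversely, if `1` and `2` get different colours, the arc from `3` to `0` is
monochromatic, of colour `a` say, and the pairs `(-1, 2)` and `(1, 4)` each identify two of the
colours of `0, 1, 2, 3` and `a`, leaving at most three; rotating the cycle reduces the general
non-constant case to this one. -/

namespace SimpleGraph.Walk

variable {V : Type*} {G : SimpleGraph V} {u v x : V}

theorem mem_support_tail_dropLast_iff (p : G.Walk u v) :
    x ∈ p.support.tail.dropLast ↔ ∃ i, 0 < i ∧ i < p.length ∧ p.getVert i = x := by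
  simp only [List.mem_iff_getElem, List.getElem_dropLast, List.getElem_tail,
    support_getElem_eq_getVert, List.length_dropLast, List.length_tail, length_support]
  constructor
  · rintro ⟨j, hj, rfl⟩
    exact ⟨j + 1, by omega, by omega, rfl⟩
  · rintro ⟨i, hi0, hi, rfl⟩
    exact ⟨i - 1, by omega, by rw [Nat.sub_add_cancel hi0]⟩

theorem mem_support_tail_dropLast_reverse (p : G.Walk u v) :
    x ∈ p.reverse.support.tail.dropLast ↔ x ∈ p.support.tail.dropLast := by
  simp only [mem_support_tail_dropLast_iff, length_reverse, getVert_reverse]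
  constructor <;> rintro ⟨i, hi0, hi, rfl⟩
  · exact ⟨p.length - i, by omega, by omega, rfl⟩
  · exact ⟨p.length - i, by omega, by omega, by rw [Nat.sub_sub_self hi.le]⟩

end SimpleGraph.Walk

theorem Fin.val_sub_eq_ite {n : ℕ} (a b : Fin n) :
    (a - b).val = if b ≤ a then a.val - b.val else n + a.val - b.val := by
  split_ifs with h
  · exact Fin.sub_val_of_le h
  · exact Fin.coe_sub_iff_lt.2 (not_le.1 h)

theorem Set.ncard_range_le_natCard {α β : Type*} [Finite α] (f : α → β) :
    (Set.range f).ncard ≤ Nat.card α := by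
  rw [← Set.image_univ]
  exact (Set.ncard_image_le (Set.toFinite _)).trans (by simp)

theorem ncard_range_min_two {n : ℕ} (hn : 3 ≤ n) :
    (Set.range fun x : Fin n => min x.val 2).ncard = 3 := by
  have : (Set.range fun x : Fin n => min x.val 2) = {0, 1, 2} := by
    ext k
    simp only [Set.mem_range, Set.mem_insert_iff, Set.mem_singleton_iff]
    constructor
    · rintro ⟨x, rfl⟩
      omega
    · rintro (rfl | rfl | rfl)
      exacts [⟨⟨0, by omega⟩, rfl⟩, ⟨⟨1, by omega⟩, rfl⟩, ⟨⟨2, by omega⟩, rfl⟩]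
  rw [this, Set.ncard_eq_three]
  exact ⟨0, 1, 2, by simp⟩

namespace SimpleGraph

open scoped Fin.CommRing

variable {n : ℕ}

/-- The vertices strictly inside the arc that runs from `u` upwards to `v`; empty if `u = v`. -/
def cycleArc (u v : Fin n) : Set (Fin n) :=
  {x | 0 < (x - u).val ∧ (x - u).val < (v - u).val}

theorem mem_cycleArc_iff {u v x : Fin n} :
    x ∈ cycleArc u v ↔
      u.val < x.val ∧ x.val < v.val ∨ v.val < u.val ∧ (u.val < x.val ∨ x.val < v.val) := by
  simp only [cycleArc, Set.mem_ofPred_eq, Fin.val_sub_eq_ite]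
  split_ifs <;> omega

variable [NeZero n]

theorem cycleArc_subsingleton {u v : Fin n} (h : (v - u).val ≤ 2) :
    (cycleArc u v).Subsingleton := by
  rintro x ⟨hx0, hx⟩ y ⟨hy0, hy⟩
  exact sub_left_inj.1 (Fin.ext (by omega) : x - u = y - u)

theorem cycleGraph_adj_add_one (hn : 1 < n) (u : Fin n) : (cycleGraph n).Adj u (u + 1) := by
  rw [cycleGraph_adj']
  right
  simp [Nat.mod_eq_of_lt hn]

theorem sub_eq_one_or_neg_one_of_adj {u v : Fin n} (h : (cycleGraph n).Adj u v) :
    v - u = 1 ∨ v - u = -1 := by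
  have one_of_val {a : Fin n} (ha : a.val = 1) : a = 1 :=
    Fin.ext (by rw [ha, Fin.val_one', Nat.mod_eq_of_lt (by omega)])
  rcases cycleGraph_adj'.1 h with h | h
  · right
    rw [← neg_sub, one_of_val h]
  · exact Or.inl (one_of_val h)

theorem exists_walk_getVert_eq_add (u : Fin n) {k : ℕ} (hk : k < n) :
    ∃ p : (cycleGraph n).Walk u (u + k), p.length = k ∧ ∀ i ≤ k, p.getVert i = u + i := by
  induction k generalizing u with
  | zero => exact ⟨Walk.nil.copy rfl (by simp), by simp, fun i hi => by simp_all⟩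
  | succ k ih =>
    obtain ⟨q, hq_len, hq⟩ := ih (u + 1) (by omega)
    refine ⟨(Walk.cons (cycleGraph_adj_add_one (by omega) u) q).copy rfl (by push_cast; ring),
      by simp [hq_len], fun i hi => ?_⟩
    rcases i with _ | i
    · simp
    · rw [Walk.getVert_copy, Walk.getVert_cons_succ, hq i (by omega)]
      push_cast; ring

theorem Walk.IsPath.exists_getVert_eq_add_mul {u v : Fin n} {p : (cycleGraph n).Walk u v}
    (hp : p.IsPath) : ∃ s : Fin n, (s = 1 ∨ s = -1) ∧ ∀ i ≤ p.length, p.getVert i = u + s * i := by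
  rcases Nat.eq_zero_or_pos p.length with h0 | hpos
  · refine ⟨1, Or.inl rfl, fun i hi => ?_⟩
    obtain rfl : i = 0 := by omega
    simp
  set step : ℕ → Fin n := fun i => p.getVert (i + 1) - p.getVert i with hstep
  have step_pm (i : ℕ) (hi : i < p.length) : step i = 1 ∨ step i = -1 :=
    sub_eq_one_or_neg_one_of_adj (p.adj_getVert_succ hi)
  -- a path in the cycle cannot turn back, since that would revisit a vertex
  have step_succ (i : ℕ) (hi : i + 1 < p.length) : step (i + 1) = step i := by
    by_contra hne
    have hback : step (i + 1) = -step i := by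
      rcases step_pm i (by omega) with h | h <;> rcases step_pm (i + 1) hi with h' | h' <;>
        simp_all
    have hrev : p.getVert (i + 2) = p.getVert i := by
      simp only [hstep] at hback
      linear_combination hback
    have := hp.getVert_injOn (by simp only [Set.mem_ofPred_eq]; omega)
      (by simp only [Set.mem_ofPred_eq]; omega) hrev
    omega
  have step_eq (i : ℕ) (hi : i < p.length) : step i = step 0 := by
    induction i with
    | zero => rfl
    | succ i ih => rw [step_succ i hi, ih (by omega)]
  refine ⟨step 0, step_pm 0 hpos, fun i hi => ?_⟩
  induction i with
  | zero => simp
  | succ i ih =>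
    have h := step_eq i (by omega)
    simp only [hstep] at h
    push_cast
    linear_combination h + ih (by omega)

theorem mem_cycleArc_iff_of_getVert_eq_add {u v : Fin n} (p : (cycleGraph n).Walk u v)
    (hlen : p.length < n) (hp : ∀ i ≤ p.length, p.getVert i = u + i) (x : Fin n) :
    x ∈ p.support.tail.dropLast ↔ x ∈ cycleArc u v := by
  have hv : v - u = p.length := by
    have h := hp _ le_rfl
    rw [p.getVert_length] at h
    linear_combination h
  have hval (i : ℕ) (hi : i < n) : (u + i - u).val = i := by
    rw [add_sub_cancel_left, Fin.val_cast_of_lt hi]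
  rw [Walk.mem_support_tail_dropLast_iff, cycleArc, Set.mem_ofPred_eq, hv,
    Fin.val_cast_of_lt hlen]
  constructor
  · rintro ⟨i, hi0, hi, rfl⟩
    rw [hp i hi.le, hval i (by omega)]
    exact ⟨hi0, hi⟩
  · rintro ⟨h0, h⟩
    exact ⟨(x - u).val, h0, h, by rw [hp _ h.le, Fin.cast_val_eq_self]; ring⟩

theorem Walk.IsPath.mem_support_tail_dropLast_iff_cycleArc {u v : Fin n}
    {p : (cycleGraph n).Walk u v} (hp : p.IsPath) :
    (∀ x, x ∈ p.support.tail.dropLast ↔ x ∈ cycleArc u v) ∨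
      (∀ x, x ∈ p.support.tail.dropLast ↔ x ∈ cycleArc v u) := by
  have hlen : p.length < n := by simpa using hp.length_lt
  obtain ⟨s, hs | hs, hgetVert⟩ := hp.exists_getVert_eq_add_mul
  · exact Or.inl <| mem_cycleArc_iff_of_getVert_eq_add p hlen (by simpa [hs] using hgetVert)
  · have hv : v = u - p.length := by
      have h := hgetVert _ le_rfl
      rw [p.getVert_length, hs] at h
      linear_combination h
    refine Or.inr fun x => ?_
    rw [← p.mem_support_tail_dropLast_reverse]
    refine mem_cycleArc_iff_of_getVert_eq_add p.reverse (by simpa using hlen) (fun i hi => ?_) x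
    rw [Walk.length_reverse] at hi
    rw [Walk.getVert_reverse, hgetVert _ (by omega), hs, Nat.cast_sub hi]
    linear_combination -hv

theorem exists_isPath_cycleArc (u v : Fin n) :
    ∃ p : (cycleGraph n).Walk u v, p.IsPath ∧
      ∀ x, x ∈ p.support.tail.dropLast ↔ x ∈ cycleArc u v := by
  obtain ⟨p, hlen, hp⟩ := exists_walk_getVert_eq_add u (v - u).isLt
  have hv : u + ((v - u).val : Fin n) = v := by rw [Fin.cast_val_eq_self]; ring
  have hp' : ∀ i ≤ (p.copy rfl hv).length, (p.copy rfl hv).getVert i = u + i := by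
    simpa [hlen] using hp
  refine ⟨p.copy rfl hv, (Walk.IsPath.getVert_injOn_iff _).1 fun i hi j hj hij => ?_,
    mem_cycleArc_iff_of_getVert_eq_add _ (by simp [hlen]) hp'⟩
  simp only [Set.mem_ofPred_eq, Walk.length_copy, hlen] at hi hj
  rw [hp' i (by simpa [hlen] using hi), hp' j (by simpa [hlen] using hj), add_right_inj] at hij
  have := congrArg Fin.val hij
  rwa [Fin.val_cast_of_lt (by omega), Fin.val_cast_of_lt (by omega)] at this

end SimpleGraph

section

open scoped Fin.CommRing

variable {n : ℕ} [NeZero n]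

theorem isMVCColoring_cycleGraph_iff (c : Fin n → ℕ) :
    IsMVCColoring (cycleGraph n) c ↔ ∀ u v : Fin n,
      (∀ x ∈ cycleArc u v, ∀ y ∈ cycleArc u v, c x = c y) ∨
        (∀ x ∈ cycleArc v u, ∀ y ∈ cycleArc v u, c x = c y) := by
  constructor
  · intro hc u v
    obtain ⟨p, hp, hmono⟩ := hc u v
    rcases hp.mem_support_tail_dropLast_iff_cycleArc with h | h
    · exact Or.inl fun x hx y hy => hmono x ((h x).2 hx) y ((h y).2 hy)
    · exact Or.inr fun x hx y hy => hmono x ((h x).2 hx) y ((h y).2 hy)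
  · intro h u v
    rcases h u v with h | h
    · obtain ⟨p, hp, harc⟩ := exists_isPath_cycleArc u v
      exact ⟨p, hp, fun x hx y hy => h x ((harc x).1 hx) y ((harc y).1 hy)⟩
    · obtain ⟨p, hp, harc⟩ := exists_isPath_cycleArc v u
      refine ⟨p.reverse, hp.reverse, fun x hx y hy => h x ?_ y ?_⟩
      · exact (harc x).1 (p.mem_support_tail_dropLast_reverse.1 hx)
      · exact (harc y).1 (p.mem_support_tail_dropLast_reverse.1 hy)

theorem IsMVCColoring.eq_or_eq_of_mem_cycleArc {c : Fin n → ℕ}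
    (hc : IsMVCColoring (cycleGraph n) c) {u v x y x' y' : Fin n}
    (hx : x ∈ cycleArc u v) (hy : y ∈ cycleArc u v) (hx' : x' ∈ cycleArc v u)
    (hy' : y' ∈ cycleArc v u) : c x = c y ∨ c x' = c y' := by
  rcases (isMVCColoring_cycleGraph_iff c).1 hc u v with h | h
  exacts [Or.inl (h x hx y hy), Or.inr (h x' hx' y' hy')]

theorem IsMVCColoring.comp_add_right {c : Fin n → ℕ} (hc : IsMVCColoring (cycleGraph n) c)
    (w : Fin n) : IsMVCColoring (cycleGraph n) (fun x => c (x + w)) := by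
  have harc {x u v : Fin n} : x + w ∈ cycleArc (u + w) (v + w) ↔ x ∈ cycleArc u v := by
    simp only [cycleArc, Set.mem_ofPred_eq, add_sub_add_right_eq_sub]
  rw [isMVCColoring_cycleGraph_iff] at hc ⊢
  intro u v
  rcases hc (u + w) (v + w) with h | h
  · exact Or.inl fun x hx y hy => h _ (harc.2 hx) _ (harc.2 hy)
  · exact Or.inr fun x hx y hy => h _ (harc.2 hx) _ (harc.2 hy)

theorem isMVCColoring_cycleGraph_of_le_five (hn : n ≤ 5) (c : Fin n → ℕ) :
    IsMVCColoring (cycleGraph n) c := by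
  rw [isMVCColoring_cycleGraph_iff]
  intro u v
  have : (v - u).val ≤ 2 ∨ (u - v).val ≤ 2 := by
    simp only [Fin.val_sub_eq_ite]
    split_ifs <;> omega
  rcases this with h | h
  · exact Or.inl fun x hx y hy => congrArg c (cycleArc_subsingleton h hx hy)
  · exact Or.inr fun x hx y hy => congrArg c (cycleArc_subsingleton h hx hy)

theorem isMVCColoring_cycleGraph_of_forall_two_le {c : Fin n → ℕ} {a : ℕ}
    (hc : ∀ x : Fin n, 2 ≤ x.val → c x = a) : IsMVCColoring (cycleGraph n) c := by
  rw [isMVCColoring_cycleGraph_iff]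
  intro u v
  have : (∀ x ∈ cycleArc u v, 2 ≤ x.val) ∨ (∀ x ∈ cycleArc v u, 2 ≤ x.val) := by
    by_contra! ⟨⟨x, hx, hx2⟩, ⟨y, hy, hy2⟩⟩
    rw [mem_cycleArc_iff] at hx hy
    omega
  rcases this with h | h
  · exact Or.inl fun x hx y hy => by rw [hc x (h x hx), hc y (h y hy)]
  · exact Or.inr fun x hx y hy => by rw [hc x (h x hx), hc y (h y hy)]

theorem IsMVCColoring.ncard_range_le_three_of_ne (hn : 6 ≤ n) {c : Fin n → ℕ}
    (hc : IsMVCColoring (cycleGraph n) c) (h12 : c 1 ≠ c 2) :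
    (Set.range c).ncard ≤ 3 := by
  let V (k : ℕ) (hk : k < n := by omega) : Fin n := ⟨k, hk⟩
  have h12' : c (V 1) ≠ c (V 2) := by
    convert h12 using 2 <;> simp [V, Fin.ext_iff, Nat.mod_eq_of_lt (by omega : 1 < n),
      Nat.mod_eq_of_lt (by omega : 2 < n)]
  have hfar : ∀ x : Fin n, 4 ≤ x.val → c x = c (V 4) := by
    intro x hx
    refine (hc.eq_or_eq_of_mem_cycleArc (u := V 0) (v := V 3) (x := V 1) (y := V 2)
      ?_ ?_ ?_ ?_).resolve_left h12' <;> simp only [mem_cycleArc_iff, V] <;> omega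
  set a := c (V 4)
  have h01 : c (V 0) = c (V 1) ∨ c (V 3) = a := by
    refine hc.eq_or_eq_of_mem_cycleArc (u := V (n - 1)) (v := V 2) ?_ ?_ ?_ ?_ <;>
      simp only [mem_cycleArc_iff, V] <;> omega
  have h23 : c (V 2) = c (V 3) ∨ c (V 0) = a := by
    rw [← hfar (V 5) (by simp [V])]
    refine hc.eq_or_eq_of_mem_cycleArc (u := V 1) (v := V 4) ?_ ?_ ?_ ?_ <;>
      simp only [mem_cycleArc_iff, V] <;> omega
  have hcover : ∀ x, c x = a ∨ c x = c (V 0) ∨ c x = c (V 1) ∨ c x = c (V 2) ∨ c x = c (V 3) := by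
    intro x
    obtain hx | hx | hx | hx | hx : x = V 0 ∨ x = V 1 ∨ x = V 2 ∨ x = V 3 ∨ 4 ≤ x.val := by
      simp only [V, Fin.ext_iff]; omega
    all_goals simp [hx, hfar]
  obtain ⟨b, d, hbd⟩ : ∃ b d, ∀ x, c x = a ∨ c x = b ∨ c x = d := by
    rcases h01 with h01 | h01 <;> rcases h23 with h23 | h23
    exacts [⟨c (V 1), c (V 3), by grind⟩, ⟨c (V 2), c (V 3), by grind⟩,
      ⟨c (V 0), c (V 1), by grind⟩, ⟨c (V 1), c (V 2), by grind⟩]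
  calc (Set.range c).ncard ≤ (({a, b, d} : Finset ℕ) : Set ℕ).ncard :=
        Set.ncard_le_ncard (by rintro _ ⟨x, rfl⟩; simpa using hbd x) (Finset.finite_toSet _)
    _ ≤ 3 := by rw [Set.ncard_coe_finset]; exact Finset.card_le_three

theorem IsMVCColoring.ncard_range_le_three (hn : 6 ≤ n) {c : Fin n → ℕ}
    (hc : IsMVCColoring (cycleGraph n) c) : (Set.range c).ncard ≤ 3 := by
  by_cases hconst : ∀ x : Fin n, c (x + 1) = c x
  · have hc0 (k : ℕ) : c k = c 0 := by
      induction k with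
      | zero => simp
      | succ k ih => rw [Nat.cast_succ, hconst, ih]
    have hsub : Set.range c ⊆ {c 0} := by
      rintro _ ⟨x, rfl⟩
      simpa using hc0 x
    calc (Set.range c).ncard ≤ ({c 0} : Set ℕ).ncard := Set.ncard_le_ncard hsub
      _ ≤ 3 := by simp
  · obtain ⟨w, hw⟩ := not_forall.1 hconst
    rw [← (Equiv.addRight (w - 1)).surjective.range_comp c]
    refine (hc.comp_add_right (w - 1)).ncard_range_le_three_of_ne hn ?_
    show c (1 + (w - 1)) ≠ c (2 + (w - 1))
    rw [show (1 : Fin n) + (w - 1) = w by ring, show (2 : Fin n) + (w - 1) = w + 1 by ring]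
    exact Ne.symm hw

end

theorem stmt_6 (n : ℕ) (h3 : 3 ≤ n) :
    (n ≤ 5 → mvc (SimpleGraph.cycleGraph n) = n) ∧
    (6 ≤ n → mvc (SimpleGraph.cycleGraph n) = 3) := by
  have : NeZero n := ⟨by omega⟩
  refine ⟨fun h5 => IsGreatest.csSup_eq ⟨?_, ?_⟩, fun h6 => IsGreatest.csSup_eq ⟨?_, ?_⟩⟩
  · exact ⟨Fin.val, isMVCColoring_cycleGraph_of_le_five h5 _, by simp⟩
  · rintro k ⟨c, -, rfl⟩
    simpa using Set.ncard_range_le_natCard c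
  · exact ⟨fun x => min x.val 2,
      isMVCColoring_cycleGraph_of_forall_two_le fun x hx => min_eq_right hx, ncard_range_min_two h3⟩
  · rintro k ⟨c, hc, rfl⟩
    exact hc.ncard_range_le_three h6
end

section
/- Let G be a connected graph with n vertices and exactly C(n−2,2) + 2 edges. Then mvc(G) ≥ n − 1, and this bound is sharp: the graph obtained from K_{n−2} by attaching a path of length 2 at one vertex has exactly C(n−2,2)+2 edges and mvc equal to n − 1. -/
open SimpleGraph

/-- The graph obtained from `K_{n-2}` (on vertices `0,…,n-3`) by attaching a path of
length 2 at vertex `n-3` (through vertices `n-3, n-2, n-1`). -/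
def cliqueWithP2 (n : ℕ) : SimpleGraph (Fin n) :=
  SimpleGraph.fromRel (fun i j =>
    (i.val < n - 2 ∧ j.val < n - 2) ∨ (j.val = i.val + 1 ∧ n - 3 ≤ i.val))

/-!
Let `n = |V|`. Under the edge hypothesis the complement `Gᶜ` has `2n - 5` edges. Call `a, b`
far if their distance is at least `3`; then every other vertex is a non-neighbour of `a` or of
`b`. Counting the edges of `Gᶜ` at their endpoint of higher rank, for suitable rankings of the
vertices, shows that fewer than `2n - 4` non-edges leave no room for two disjoint far pairs or a
far triangle, so all far pairs share a vertex `y`; the same count gives a vertex `w` at distance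
`2` from `y` adjacent to all far partners of `y`. With `u` a common neighbour of `y` and `w`,
every far pair is joined by a path with interior `{u, w}`, so the colouring which merges `u`
and `w` and is injective elsewhere is an MVC-colouring with `n - 1` colours.

Conversely, a path between far vertices has two distinct interior vertices, so a graph with a
far pair admits no injective MVC-colouring; the end vertices of the pendant path of
`cliqueWithP2 n` are far.
-/

open Finset

theorem Finset.two_le_card_filter_univ {α : Type*} [Fintype α] {p : α → Prop} [DecidablePred p]
    {a b : α} (ha : p a) (hb : p b) (hab : a ≠ b) : 2 ≤ #{u | p u} :=
  one_lt_card.2 ⟨a, mem_filter.2 ⟨mem_univ _, ha⟩, b, mem_filter.2 ⟨mem_univ _, hb⟩, hab⟩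

theorem Set.ncard_range_le_card {α β : Type*} [Fintype α] (f : α → β) :
    (Set.range f).ncard ≤ Fintype.card α := by
  rw [← Set.image_univ, ← Nat.card_eq_fintype_card, ← Set.ncard_univ]
  exact Set.ncard_image_le Set.finite_univ

namespace SimpleGraph

variable {V : Type*}

theorem exists_forall_adj_eq_or_eq_of_intersecting {D : SimpleGraph V} {x₀ y₀ : V}
    (h₀ : D.Adj x₀ y₀)
    (hmeet : ∀ a b c d, D.Adj a b → D.Adj c d → a = c ∨ a = d ∨ b = c ∨ b = d)
    (htri : ∀ a b c, D.Adj a b → D.Adj b c → ¬D.Adj a c) :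
    ∃ y, ∀ a b, D.Adj a b → a = y ∨ b = y := by
  by_contra! h
  have hx₀ : ∃ e, D.Adj x₀ e ∧ e ≠ y₀ := by
    obtain ⟨a, b, hab, ha, hb⟩ := h y₀
    rcases hmeet _ _ _ _ hab h₀ with rfl | rfl | rfl | rfl
    exacts [⟨b, hab, hb⟩, absurd rfl ha, ⟨a, hab.symm, ha⟩, absurd rfl hb]
  have hy₀ : ∃ f, D.Adj y₀ f ∧ f ≠ x₀ := by
    obtain ⟨a, b, hab, ha, hb⟩ := h x₀
    rcases hmeet _ _ _ _ hab h₀ with rfl | rfl | rfl | rfl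
    exacts [absurd rfl ha, ⟨b, hab, hb⟩, absurd rfl hb, ⟨a, hab.symm, ha⟩]
  obtain ⟨e, hx₀e, hey₀⟩ := hx₀
  obtain ⟨f, hy₀f, hfx₀⟩ := hy₀
  rcases hmeet _ _ _ _ hx₀e hy₀f with h | h | h | rfl
  exacts [h₀.ne h, hfx₀ h.symm, hey₀ h, htri _ _ _ h₀ hy₀f hx₀e]

/-- Each edge is counted once, at its endpoint of larger rank. -/
theorem sum_card_adj_lt_le_card_edgeFinset {α : Type*} [Preorder α] [DecidableLT α] [Fintype V]
    (H : SimpleGraph V) [DecidableRel H.Adj] (r : V → α) :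
    ∑ v, #{u | H.Adj v u ∧ r u < r v} ≤ #H.edgeFinset := by
  rw [← card_sigma]
  refine card_le_card_of_injOn (fun x => s(x.1, x.2)) (fun ⟨v, u⟩ hx => ?_) ?_
  · simp only [coe_sigma, Set.mem_sigma_iff, coe_filter, mem_univ, true_and,
      Set.mem_ofPred_eq] at hx
    simpa using hx.2.1
  · rintro ⟨v, u⟩ hx ⟨v', u'⟩ hx' he
    dsimp only at he
    simp only [coe_sigma, Set.mem_sigma_iff, coe_filter, mem_univ, true_and,
      Set.mem_ofPred_eq] at hx hx'
    rcases Sym2.eq_iff.1 he with ⟨rfl, rfl⟩ | ⟨rfl, rfl⟩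
    · rfl
    · exact absurd (hx.2.2.trans hx'.2.2) (lt_irrefl _)

variable (G : SimpleGraph V)

/-- Pairs of vertices at distance at least `3`. -/
def farGraph : SimpleGraph V where
  Adj a b := a ≠ b ∧ ¬G.Adj a b ∧ ∀ z, ¬(G.Adj a z ∧ G.Adj z b)
  symm := ⟨fun _ _ h => ⟨h.1.symm, fun h' => h.2.1 h'.symm,
    fun z hz => h.2.2 z ⟨hz.2.symm, hz.1.symm⟩⟩⟩
  loopless := ⟨fun _ h => h.1 rfl⟩

theorem card_edgeFinset_add_card_compl_edgeFinset [Fintype V] [DecidableEq V]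
    [DecidableRel G.Adj] : #G.edgeFinset + #Gᶜ.edgeFinset = (Fintype.card V).choose 2 := by
  rw [← card_edgeFinset_top_eq_card_choose_two, ← card_union_of_disjoint]
  · congr 1
    ext e
    induction e using Sym2.ind with | _ x y => ?_
    by_cases h : G.Adj x y
    · simp [h, h.ne]
    · simp [h]
  · simpa [← disjoint_coe] using disjoint_compl_right

variable {G}

theorem Walk.length_support_tail_dropLast {u v : V} (p : G.Walk u v) :
    p.support.tail.dropLast.length = p.length - 1 := by
  rw [List.length_dropLast, List.length_tail, Walk.length_support, Nat.add_sub_cancel]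

theorem three_le_length_of_farGraph_adj {a b : V} (h : G.farGraph.Adj a b) (p : G.Walk a b) :
    3 ≤ p.length := by
  obtain ⟨hab, hnadj, hnz⟩ := h
  match p with
  | .nil => exact absurd rfl hab
  | .cons h₁ .nil => exact absurd h₁ hnadj
  | .cons h₁ (.cons h₂ .nil) => exact absurd ⟨h₁, h₂⟩ (hnz _)
  | .cons _ (.cons _ (.cons _ _)) => simp

theorem exists_adj_adj_of_not_farGraph_adj {a b : V} (hab : a ≠ b) (hadj : ¬G.Adj a b)
    (h : ¬G.farGraph.Adj a b) : ∃ z, G.Adj a z ∧ G.Adj z b := by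
  by_contra! hz
  exact h ⟨hab, hadj, fun z hz' => hz z hz'.1 hz'.2⟩

theorem exists_isPath_length_le_two_of_not_farGraph_adj {a b : V} (h : ¬G.farGraph.Adj a b) :
    ∃ p : G.Walk a b, p.IsPath ∧ p.length ≤ 2 := by
  by_cases hab : a = b
  · subst hab
    exact ⟨.nil, .nil, by simp⟩
  by_cases hadj : G.Adj a b
  · exact ⟨hadj.toWalk, by simp [hab], by simp⟩
  obtain ⟨z, haz, hzb⟩ := exists_adj_adj_of_not_farGraph_adj hab hadj h
  refine ⟨.cons haz hzb.toWalk, ?_, by simp⟩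
  simp [Walk.cons_isPath_iff, hab, haz.ne, hzb.ne]

theorem exists_isPath_support_tail_dropLast_eq {a u w b : V} (h₁ : G.Adj a u) (h₂ : G.Adj u w)
    (h₃ : G.Adj w b) (hab : a ≠ b) (haw : a ≠ w) (hub : u ≠ b) :
    ∃ p : G.Walk a b, p.IsPath ∧ p.support.tail.dropLast = [u, w] :=
  ⟨.cons h₁ (.cons h₂ h₃.toWalk), by simp [Walk.cons_isPath_iff, *, h₁.ne, h₂.ne, h₃.ne], rfl⟩

theorem compl_adj_of_farGraph_adj {a b : V} (h : G.farGraph.Adj a b) : Gᶜ.Adj a b :=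
  ⟨h.1, h.2.1⟩

theorem compl_adj_of_adj_of_farGraph_adj {y a b : V} (ha : G.Adj y a) (hb : G.farGraph.Adj y b) :
    Gᶜ.Adj a b :=
  ⟨fun hab => hb.2.1 (hab ▸ ha), fun hab => hb.2.2 a ⟨ha, hab⟩⟩

theorem compl_adj_or_compl_adj_of_farGraph_adj {a b v : V} (h : G.farGraph.Adj a b)
    (ha : v ≠ a) (hb : v ≠ b) : Gᶜ.Adj v a ∨ Gᶜ.Adj v b := by
  simp only [compl_adj, ha, hb, Ne, not_false_eq_true, true_and, ← not_and_or]
  exact fun hab => h.2.2 v ⟨hab.1.symm, hab.2⟩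

theorem exists_compl_adj_lt_of_farGraph_adj {α : Type*} [Preorder α] (r : V → α) {a b v : V}
    (h : G.farGraph.Adj a b) (ha : r a < r v) (hb : r b < r v) :
    ∃ u, (u = a ∨ u = b) ∧ Gᶜ.Adj v u ∧ r u < r v := by
  rcases compl_adj_or_compl_adj_of_farGraph_adj h (ne_of_apply_ne r ha.ne')
    (ne_of_apply_ne r hb.ne') with h' | h'
  exacts [⟨a, .inl rfl, h', ha⟩, ⟨b, .inr rfl, h', hb⟩]

section Counting

variable [Fintype V] [DecidableEq V] [DecidableRel G.Adj]

instance : DecidableRel G.farGraph.Adj := fun a b =>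
  inferInstanceAs (Decidable (a ≠ b ∧ ¬G.Adj a b ∧ ∀ z, ¬(G.Adj a z ∧ G.Adj z b)))

theorem le_card_compl_edgeFinset (r : V → ℕ) (s : Finset V) {m k : ℕ}
    (hs : m ≤ ∑ v ∈ s, #{u | Gᶜ.Adj v u ∧ r u < r v})
    (hk : ∀ v ∉ s, k ≤ #{u | Gᶜ.Adj v u ∧ r u < r v}) :
    m + k * (Fintype.card V - #s) ≤ #Gᶜ.edgeFinset := by
  refine le_trans ?_ (sum_card_adj_lt_le_card_edgeFinset Gᶜ r)
  rw [← sum_add_sum_compl s, ← card_compl, mul_comm, ← smul_eq_mul]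
  exact add_le_add hs (card_nsmul_le_sum _ _ _ fun v hv => hk v (mem_compl.1 hv))

theorem le_card_compl_edgeFinset_of_farGraph_adj_of_farGraph_adj {x y x' y' : V}
    (h : G.farGraph.Adj x y) (h' : G.farGraph.Adj x' y')
    (hxx' : x ≠ x') (hxy' : x ≠ y') (hyx' : y ≠ x') (hyy' : y ≠ y') :
    2 * Fintype.card V - 4 ≤ #Gᶜ.edgeFinset := by
  let r : V → ℕ := fun v =>
    if v = x then 0 else if v = y then 1 else if v = x' then 2 else if v = y' then 3 else 4
  have hx : r x = 0 := by simp [r]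
  have hy : r y = 1 := by simp [r, h.ne.symm]
  have hx' : r x' = 2 := by simp [r, hxx'.symm, hyx'.symm]
  have hy' : r y' = 3 := by simp [r, hxy'.symm, hyy'.symm, h'.ne.symm]
  have hs : 2 ≤ ∑ v ∈ {x, y, x'}, #{u | Gᶜ.Adj v u ∧ r u < r v} := by
    rw [sum_insert (by simp [h.ne, hxx']), sum_pair hyx']
    obtain ⟨u, -, hu⟩ :=
      exists_compl_adj_lt_of_farGraph_adj r h (v := x') (by omega) (by omega)
    have : 0 < #{u | Gᶜ.Adj y u ∧ r u < r y} :=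
      card_pos.2 ⟨x, mem_filter.2 ⟨mem_univ _, (compl_adj_of_farGraph_adj h).symm, by omega⟩⟩
    have : 0 < #{u | Gᶜ.Adj x' u ∧ r u < r x'} := card_pos.2 ⟨u, mem_filter.2 ⟨mem_univ _, hu⟩⟩
    omega
  refine le_trans ?_ (le_card_compl_edgeFinset r _ hs (k := 2) fun v hv => ?_)
  · rw [card_insert_of_notMem (by simp [h.ne, hxx']), card_pair hyx']
    omega
  simp only [mem_insert, mem_singleton, not_or] at hv
  have hrv : r v = if v = y' then 3 else 4 := by simp [r, hv]
  obtain ⟨a, ha, ha'⟩ :=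
    exists_compl_adj_lt_of_farGraph_adj r h (v := v) (by split_ifs at hrv <;> omega)
      (by split_ifs at hrv <;> omega)
  obtain ⟨b, hb, hb'⟩ : ∃ b, (b = x' ∨ b = y') ∧ Gᶜ.Adj v b ∧ r b < r v := by
    by_cases hvy' : v = y'
    · subst hvy'
      exact ⟨x', .inl rfl, (compl_adj_of_farGraph_adj h').symm, by omega⟩
    · rw [if_neg hvy'] at hrv
      exact exists_compl_adj_lt_of_farGraph_adj r h' (by omega) (by omega)
  refine two_le_card_filter_univ ha' hb' ?_
  rcases ha with rfl | rfl <;> rcases hb with rfl | rfl <;> assumption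

theorem le_card_compl_edgeFinset_of_farGraph_triangle {x y z : V} (hxy : G.farGraph.Adj x y)
    (hyz : G.farGraph.Adj y z) (hxz : G.farGraph.Adj x z) :
    2 * Fintype.card V - 3 ≤ #Gᶜ.edgeFinset := by
  let r : V → ℕ := fun v => if v = x then 0 else if v = y then 1 else if v = z then 2 else 3
  have hx : r x = 0 := by simp [r]
  have hy : r y = 1 := by simp [r, hxy.ne.symm]
  have hz : r z = 2 := by simp [r, hxz.ne.symm, hyz.ne.symm]
  have hs : 1 ≤ ∑ v ∈ {x, y}, #{u | Gᶜ.Adj v u ∧ r u < r v} := by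
    rw [sum_pair hxy.ne]
    have : 0 < #{u | Gᶜ.Adj y u ∧ r u < r y} :=
      card_pos.2 ⟨x, mem_filter.2 ⟨mem_univ _, (compl_adj_of_farGraph_adj hxy).symm, by omega⟩⟩
    omega
  refine le_trans ?_ (le_card_compl_edgeFinset r _ hs (k := 2) fun v hv => ?_)
  · rw [card_pair hxy.ne]
    omega
  simp only [mem_insert, mem_singleton, not_or] at hv
  by_cases hvz : v = z
  · subst hvz
    exact two_le_card_filter_univ (a := x) (b := y)
      ⟨(compl_adj_of_farGraph_adj hxz).symm, by omega⟩
      ⟨(compl_adj_of_farGraph_adj hyz).symm, by omega⟩ hxy.ne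
  have hrv : r v = 3 := by simp [r, hv, hvz]
  obtain ⟨a, rfl | rfl, ha⟩ :=
    exists_compl_adj_lt_of_farGraph_adj r hxy (v := v) (by omega) (by omega)
  · obtain ⟨b, hb, hb'⟩ :=
      exists_compl_adj_lt_of_farGraph_adj r hyz (v := v) (by omega) (by omega)
    refine two_le_card_filter_univ ha hb' ?_
    rcases hb with rfl | rfl
    exacts [hxy.ne, hxz.ne]
  · obtain ⟨b, hb, hb'⟩ :=
      exists_compl_adj_lt_of_farGraph_adj r hxz (v := v) (by omega) (by omega)
    refine two_le_card_filter_univ ha hb' ?_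
    rcases hb with rfl | rfl
    exacts [hxy.ne.symm, hyz.ne]

theorem le_card_compl_edgeFinset_of_forall_exists_not_adj {y a₀ : V} (ha₀ : G.Adj y a₀)
    (hF : 2 ≤ #{b | G.farGraph.Adj y b})
    (hw : ∀ w, w ≠ y → ¬G.Adj y w → ¬G.farGraph.Adj y w →
      ∃ b, G.farGraph.Adj y b ∧ ¬G.Adj w b) :
    2 * Fintype.card V - 4 ≤ #Gᶜ.edgeFinset := by
  set F : Finset V := {b | G.farGraph.Adj y b}
  have hmemF {b} : b ∈ F ↔ G.farGraph.Adj y b := by simp [F]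
  let r : V → ℕ := fun v => if v = y then 0 else if G.farGraph.Adj y v then 1 else 2
  have hy : r y = 0 := by simp [r]
  have hb {b} (hb : G.farGraph.Adj y b) : r b = 1 := by simp [r, hb, hb.ne.symm]
  have hr {v} (hvy : v ≠ y) (hv : ¬G.farGraph.Adj y v) : r v = 2 := by simp [r, hvy, hv]
  have hneighbor {a} (ha : G.Adj y a) : #F ≤ #{u | Gᶜ.Adj a u ∧ r u < r a} := by
    refine card_le_card fun b hbF => mem_filter.2 ⟨mem_univ _,
      compl_adj_of_adj_of_farGraph_adj ha (hmemF.1 hbF), ?_⟩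
    rw [hb (hmemF.1 hbF), hr ha.ne.symm fun h => h.2.1 ha]
    omega
  have ha₀F : a₀ ∉ F := fun h => (hmemF.1 h).2.1 ha₀
  have hyF : y ∉ insert a₀ F := by
    rw [mem_insert]
    exact not_or.2 ⟨ha₀.ne, fun h => (hmemF.1 h).ne rfl⟩
  have hs : #F + #F ≤ ∑ v ∈ insert y (insert a₀ F), #{u | Gᶜ.Adj v u ∧ r u < r v} := by
    rw [sum_insert hyF, sum_insert ha₀F]
    have hF' : #F • 1 ≤ ∑ b ∈ F, #{u | Gᶜ.Adj b u ∧ r u < r b} :=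
      card_nsmul_le_sum _ _ _ fun b hbF => card_pos.2 ⟨y, mem_filter.2 ⟨mem_univ _,
        (compl_adj_of_farGraph_adj (hmemF.1 hbF)).symm, by rw [hy, hb (hmemF.1 hbF)]; omega⟩⟩
    have := hneighbor ha₀
    simp only [smul_eq_mul, mul_one] at hF'
    omega
  refine le_trans ?_ (le_card_compl_edgeFinset r _ hs (k := 2) fun v hv => ?_)
  · have := card_le_univ (insert y (insert a₀ F))
    rw [card_insert_of_notMem hyF, card_insert_of_notMem ha₀F] at this ⊢
    omega
  simp only [mem_insert, hmemF, not_or] at hv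
  obtain ⟨hvy, -, hvF⟩ := hv
  by_cases hyv : G.Adj y v
  · exact hF.trans (hneighbor hyv)
  obtain ⟨b, hbF, hvb⟩ := hw v hvy hyv hvF
  refine two_le_card_filter_univ (a := y) (b := b) ⟨⟨hvy, fun h => hyv h.symm⟩, ?_⟩
    ⟨⟨fun h => hvF (h ▸ hbF), hvb⟩, ?_⟩ hbF.ne
  · rw [hy, hr hvy hvF]; omega
  · rw [hb hbF, hr hvy hvF]; omega

theorem exists_adj_adj_forall_farGraph_adj_adj (hc : G.Connected)
    (hE : #Gᶜ.edgeFinset < 2 * Fintype.card V - 4) {y b₀ : V} (hb₀ : G.farGraph.Adj y b₀) :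
    ∃ u w, G.Adj y u ∧ G.Adj u w ∧ ∀ b, G.farGraph.Adj y b → G.Adj w b := by
  obtain ⟨w, hwy, hyw, hfar, hw⟩ : ∃ w, w ≠ y ∧ ¬G.Adj y w ∧ ¬G.farGraph.Adj y w ∧
      ∀ b, G.farGraph.Adj y b → G.Adj w b := by
    by_cases hone : ∀ b, G.farGraph.Adj y b → b = b₀
    · obtain ⟨w, hb₀w⟩ := (hc.preconnected y b₀).nonempty_neighborSet_right hb₀.ne
      refine ⟨w, ?_, fun h => hb₀.2.2 w ⟨h, hb₀w.symm⟩, fun h => hb₀w.ne (hone w h).symm,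
        fun b hb => hone b hb ▸ hb₀w.symm⟩
      rintro rfl
      exact hb₀.2.1 hb₀w.symm
    push Not at hone
    obtain ⟨b₁, hb₁, hb₁b₀⟩ := hone
    by_contra! hw
    obtain ⟨a₀, ha₀⟩ := (hc.preconnected y b₀).nonempty_neighborSet_left hb₀.ne
    have := le_card_compl_edgeFinset_of_forall_exists_not_adj ha₀
      (two_le_card_filter_univ hb₁ hb₀ hb₁b₀) hw
    omega
  obtain ⟨u, hyu, huw⟩ := exists_adj_adj_of_not_farGraph_adj hwy.symm hyw hfar
  exact ⟨u, w, hyu, huw, hw⟩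

theorem exists_forall_farGraph_adj_eq_or_eq (hE : #Gᶜ.edgeFinset < 2 * Fintype.card V - 4)
    {x₀ y₀ : V} (h₀ : G.farGraph.Adj x₀ y₀) :
    ∃ y, ∀ a b, G.farGraph.Adj a b → a = y ∨ b = y := by
  refine exists_forall_adj_eq_or_eq_of_intersecting h₀ (fun a b c d hab hcd => ?_)
    (fun a b c hab hbc hac => ?_)
  · by_contra! h
    have := le_card_compl_edgeFinset_of_farGraph_adj_of_farGraph_adj hab hcd h.1 h.2.1 h.2.2.1
      h.2.2.2
    omega
  · have := le_card_compl_edgeFinset_of_farGraph_triangle hab hbc hac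
    omega

theorem exists_forall_farGraph_adj_exists_isPath (hc : G.Connected)
    (hE : #Gᶜ.edgeFinset < 2 * Fintype.card V - 4) :
    ∃ u w, u ≠ w ∧ ∀ a b, G.farGraph.Adj a b →
      ∃ p : G.Walk a b, p.IsPath ∧ p.support.tail.dropLast ⊆ [u, w] := by
  by_cases hfar : ∃ x₀ y₀, G.farGraph.Adj x₀ y₀
  swap
  · push Not at hfar
    obtain ⟨u, w, huw⟩ := Fintype.exists_pair_of_one_lt_card (α := V) (by omega)
    exact ⟨u, w, huw, fun a b hab => absurd hab (hfar a b)⟩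
  obtain ⟨x₀, y₀, h₀⟩ := hfar
  obtain ⟨y, hy⟩ := exists_forall_farGraph_adj_eq_or_eq hE h₀
  obtain ⟨b₀, hb₀⟩ : ∃ b₀, G.farGraph.Adj y b₀ := by
    rcases hy x₀ y₀ h₀ with rfl | rfl
    exacts [⟨y₀, h₀⟩, ⟨x₀, h₀.symm⟩]
  obtain ⟨u, w, hyu, huw, hw⟩ := exists_adj_adj_forall_farGraph_adj_adj hc hE hb₀
  have hpath (b) (hb : G.farGraph.Adj y b) :
      ∃ p : G.Walk y b, p.IsPath ∧ p.support.tail.dropLast = [u, w] :=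
    exists_isPath_support_tail_dropLast_eq hyu huw (hw b hb) hb.ne
      (fun h => hb.2.1 (h ▸ hw b hb)) (compl_adj_of_adj_of_farGraph_adj hyu hb).ne
  refine ⟨u, w, huw.ne, fun a b hab => ?_⟩
  rcases hy a b hab with rfl | rfl
  · obtain ⟨p, hp, hint⟩ := hpath b hab
    exact ⟨p, hp, by simp [hint]⟩
  · obtain ⟨p, hp, hint⟩ := hpath a hab.symm
    refine ⟨p.reverse, hp.reverse, ?_⟩
    simp [Walk.support_reverse, List.tail_reverse, List.dropLast_reverse, List.tail_dropLast,
      hint]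

end Counting

section Coloring

variable [Fintype V]

theorem ncard_range_le_mvc {c : V → ℕ} (hc : IsMVCColoring G c) :
    (Set.range c).ncard ≤ mvc G :=
  le_csSup ⟨Fintype.card V, by rintro _ ⟨c, -, rfl⟩; exact Set.ncard_range_le_card c⟩ ⟨c, hc, rfl⟩

theorem mvc_le_card_sub_one_of_farGraph_adj {a b : V} (hab : G.farGraph.Adj a b) :
    mvc G ≤ Fintype.card V - 1 := by
  classical
  refine csSup_le' ?_
  rintro _ ⟨c, hc, rfl⟩
  by_contra! hlt
  have hinj : Function.Injective c := by
    rw [← Set.injOn_univ, ← Set.ncard_image_iff Set.finite_univ, Set.image_univ, Set.ncard_univ,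
      Nat.card_eq_fintype_card]
    have := Set.ncard_range_le_card c
    omega
  obtain ⟨p, hp, hmono⟩ := hc a b
  have hnodup : p.support.tail.dropLast.Nodup :=
    hp.support_nodup.sublist ((List.dropLast_sublist _).trans (List.tail_sublist _))
  have hlen : 1 < #p.support.tail.dropLast.toFinset := by
    rw [List.toFinset_card_of_nodup hnodup, Walk.length_support_tail_dropLast]
    have := three_le_length_of_farGraph_adj hab p
    omega
  obtain ⟨x, hx, y, hy, hxy⟩ := one_lt_card.1 hlen
  exact hxy (hinj (hmono x (List.mem_toFinset.1 hx) y (List.mem_toFinset.1 hy)))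

theorem exists_isMVCColoring_ncard_range_eq {u w : V} (huw : u ≠ w)
    (h : ∀ a b, G.farGraph.Adj a b →
      ∃ p : G.Walk a b, p.IsPath ∧ p.support.tail.dropLast ⊆ [u, w]) :
    ∃ c : V → ℕ, IsMVCColoring G c ∧ (Set.range c).ncard = Fintype.card V - 1 := by
  classical
  let g : V → V := fun v => if v = w then u else v
  let ι : V → ℕ := fun v => Fintype.equivFin V v
  have hι : Function.Injective ι := Fin.val_injective.comp (Fintype.equivFin V).injective
  refine ⟨ι ∘ g, fun a b => ?_, ?_⟩
  · by_cases hab : G.farGraph.Adj a b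
    · obtain ⟨p, hp, hint⟩ := h a b hab
      have hg {x} (hx : x ∈ p.support.tail.dropLast) : g x = u := by
        rcases List.mem_pair.1 (hint hx) with rfl | rfl <;> simp [g]
      exact ⟨p, hp, fun x hx y hy => by simp only [Function.comp, hg hx, hg hy]⟩
    · obtain ⟨p, hp, hlen⟩ := exists_isPath_length_le_two_of_not_farGraph_adj hab
      have : #p.support.tail.dropLast.toFinset ≤ 1 :=
        (List.toFinset_card_le _).trans (by rw [Walk.length_support_tail_dropLast]; omega)
      refine ⟨p, hp, fun x hx y hy => ?_⟩
      rw [card_le_one.1 this x (List.mem_toFinset.2 hx) y (List.mem_toFinset.2 hy)]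
  · have hg : Set.range g = {w}ᶜ := by
      ext v
      refine ⟨?_, fun hv => ⟨v, if_neg hv⟩⟩
      rintro ⟨v, rfl⟩
      by_cases hv : v = w <;> simp [g, hv, huw]
    rw [Set.range_comp, hg, Set.ncard_image_of_injective _ hι, Set.ncard_compl,
      Set.ncard_singleton, Nat.card_eq_fintype_card]

variable [DecidableEq V] [DecidableRel G.Adj]

theorem card_sub_one_le_mvc (hc : G.Connected) (hE : #Gᶜ.edgeFinset < 2 * Fintype.card V - 4) :
    Fintype.card V - 1 ≤ mvc G := by
  obtain ⟨u, w, huw, h⟩ := exists_forall_farGraph_adj_exists_isPath hc hE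
  obtain ⟨c, hc, hcard⟩ := exists_isMVCColoring_ncard_range_eq huw h
  exact hcard ▸ ncard_range_le_mvc hc

theorem card_compl_edgeFinset_lt_of_le_ncard_edgeSet
    (hE : (Fintype.card V - 2).choose 2 + 2 ≤ G.edgeSet.ncard) :
    #Gᶜ.edgeFinset < 2 * Fintype.card V - 4 := by
  have hsum := card_edgeFinset_add_card_compl_edgeFinset G
  rw [← Set.ncard_coe_finset, coe_edgeFinset] at hsum
  have h2 : 2 ≤ Fintype.card V := by
    by_contra! h
    rw [Nat.choose_eq_zero_of_lt h] at hsum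
    omega
  obtain ⟨m, hm⟩ := Nat.exists_eq_add_of_le' h2
  have hchoose : (m + 2).choose 2 = m.choose 2 + 2 * m + 1 := by
    simp only [Nat.choose_succ_succ, Nat.choose_one_right, Nat.choose_zero_right]
    ring
  rw [hm, hchoose] at hsum
  rw [hm, Nat.add_sub_cancel] at hE
  omega

end Coloring

end SimpleGraph

theorem cliqueWithP2_adj {n : ℕ} {i j : Fin n} :
    (cliqueWithP2 n).Adj i j ↔ i ≠ j ∧ ((i.val < n - 2 ∧ j.val < n - 2) ∨
      (j.val = i.val + 1 ∧ n - 3 ≤ i.val) ∨ (i.val = j.val + 1 ∧ n - 3 ≤ j.val)) := by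
  rw [cliqueWithP2, fromRel_adj]
  tauto

theorem cliqueWithP2_connected {n : ℕ} (hn : 3 ≤ n) : (cliqueWithP2 n).Connected := by
  let hub : Fin n := ⟨n - 3, by omega⟩
  have hmid : (cliqueWithP2 n).Adj hub ⟨n - 2, by omega⟩ := by
    simp only [cliqueWithP2_adj, hub, Ne, Fin.ext_iff]
    omega
  refine (connected_iff_exists_forall_reachable _).2 ⟨hub, fun v => ?_⟩
  by_cases hv : v = hub
  · rw [hv]
  simp only [hub, Fin.ext_iff] at hv
  by_cases hlast : v.val = n - 1
  · refine hmid.reachable.trans (Adj.reachable ?_)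
    simp only [cliqueWithP2_adj, Ne, Fin.ext_iff]
    omega
  · refine Adj.reachable ?_
    simp only [cliqueWithP2_adj, hub, Ne, Fin.ext_iff]
    omega

theorem ncard_edgeSet_cliqueWithP2 {n : ℕ} (hn : 3 ≤ n) :
    (cliqueWithP2 n).edgeSet.ncard = (n - 2).choose 2 + 2 := by
  classical
  rw [← coe_edgeFinset, Set.ncard_coe_finset]
  let T : Finset (Fin n) := {i | i.val < n - 2}
  let Q : Finset (Fin n × Fin n) :=
    {(⟨n - 3, by omega⟩, ⟨n - 2, by omega⟩), (⟨n - 2, by omega⟩, ⟨n - 3, by omega⟩),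
      (⟨n - 2, by omega⟩, ⟨n - 1, by omega⟩), (⟨n - 1, by omega⟩, ⟨n - 2, by omega⟩)}
  have hdarts : ({p | (cliqueWithP2 n).Adj p.1 p.2} : Finset (Fin n × Fin n)) =
      T.offDiag ∪ Q := by
    ext ⟨i, j⟩
    simp only [T, Q, mem_filter, mem_univ, true_and, mem_union, mem_offDiag, mem_insert,
      mem_singleton, cliqueWithP2_adj, Prod.mk.injEq, Ne, Fin.ext_iff]
    omega
  have hT : #T = n - 2 := by simp [T, Fin.card_filter_val_lt]
  have hQ : #Q = 4 := by
    simp only [Q]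
    rw [card_insert_of_notMem, card_insert_of_notMem, card_pair] <;>
      simp only [mem_insert, mem_singleton, Ne, Prod.mk.injEq, Fin.ext_iff] <;> omega
  have hdisj : Disjoint T.offDiag Q := by
    simp only [T, Q, Finset.disjoint_left, mem_offDiag, mem_filter, mem_univ, true_and,
      mem_insert, mem_singleton, Prod.forall, Prod.mk.injEq, Fin.ext_iff]
    omega
  have h2 := (cliqueWithP2 n).two_mul_card_edgeFinset
  rw [hdarts, card_union_of_disjoint hdisj, offDiag_card, hT, hQ] at h2
  obtain ⟨m, rfl⟩ := Nat.exists_eq_add_of_le' hn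
  have hchoose : (m + 1) * m = (m + 1).choose 2 * 2 := by
    simpa using Nat.add_one_mul_choose_eq m 1
  simp only [show m + 3 - 2 = m + 1 by omega, ← Nat.mul_sub_one, Nat.add_sub_cancel] at h2 ⊢
  omega

theorem cliqueWithP2_farGraph_adj {n : ℕ} (hn : 4 ≤ n) :
    (cliqueWithP2 n).farGraph.Adj ⟨0, by omega⟩ ⟨n - 1, by omega⟩ := by
  refine ⟨fun h => ?_, fun h => ?_, fun z ⟨h₁, h₂⟩ => ?_⟩
  · simp only [Fin.ext_iff] at h
    omega
  · simp only [cliqueWithP2_adj] at h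
    omega
  · simp only [cliqueWithP2_adj] at h₁ h₂
    omega

theorem stmt_8 (n : ℕ) (hn : 4 ≤ n) :
    (∀ {V : Type} [Fintype V] (G : SimpleGraph V), G.Connected → Fintype.card V = n →
      G.edgeSet.ncard = (n - 2).choose 2 + 2 → n - 1 ≤ mvc G) ∧
    ((cliqueWithP2 n).edgeSet.ncard = (n - 2).choose 2 + 2 ∧
      mvc (cliqueWithP2 n) = n - 1) := by
  classical
  have hcount := ncard_edgeSet_cliqueWithP2 (by omega : 3 ≤ n)
  refine ⟨fun {V} _ G hc hV hE => ?_, hcount, le_antisymm ?_ ?_⟩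
  · subst hV
    exact card_sub_one_le_mvc hc (card_compl_edgeFinset_lt_of_le_ncard_edgeSet hE.ge)
  · simpa using mvc_le_card_sub_one_of_farGraph_adj (cliqueWithP2_farGraph_adj hn)
  · simpa using card_sub_one_le_mvc (cliqueWithP2_connected (by omega))
      (card_compl_edgeFinset_lt_of_le_ncard_edgeSet (by simp [hcount]))
end
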